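/- arXiv:math/0312397 — 8 statements merged into one kernel-verified Lean document; each statement's English description precedes it below -/
import Mathlib

section
/- Let Q be a linear operator on F[x] that lowers the degree of every polynomial by one (with deg 0 = −1 convention), and write Q x^n = ∑_{k=1}^n b_{n,k} x^{n−k} with b_{n,1} ≠ 0 and (after normalization) b_{1,1} = 1. Then there exist a sequence {q_k}_{k≥2} ⊂ F and an admissible sequence ψ such that Q = ∂_ψ + ∑_{k≥2} q_k ∂_ψ^k if and only if b_{n,k} = C(n,k)_ψ · b_{k,k} for all n ≥ k ≥ 1, where C(n,k)_ψ is the ψ-binomial coefficient. Moreover, when they exist, {q_k} and ψ are unique. -/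
/-!
Since `∂_ψ ^ k (X ^ n) = n_ψ (n-1)_ψ ⋯ (n-k+1)_ψ X ^ (n - k)`, the operator `Q` is the series
`∂_ψ + ∑_{k ≥ 2} q_k ∂_ψ ^ k` exactly when `b n k = q_k · n_ψ ⋯ (n-k+1)_ψ` (with `q_1 = 1`).
The case `k = 1` forces `n_ψ = b n 1`, which determines `ψ` through `n_ψ = ψ_{n-1} / ψ_n`;
the diagonal `k = n` then forces `q_k = b k k / k_ψ!`. Substituting back gives the
`ψ`-binomial condition, and conversely under that condition these choices work.
-/

open Polynomial

section CommSemiring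

variable {R : Type*} [CommSemiring R]

/-- `b n k` is the coefficient of `X ^ (n - k)` in `(∂_ψ + ∑_{k ≥ 2} q k • ∂_ψ ^ k) (X ^ n)`. -/
def IsSeriesCoeff (b : ℕ → ℕ → R) (nψ q : ℕ → R) : Prop :=
  ∀ n k, 1 ≤ k → k ≤ n → b n k = (if k = 1 then 1 else q k) * ∏ i ∈ Finset.range k, nψ (n - i)

namespace IsSeriesCoeff

variable {b : ℕ → ℕ → R} {nψ q : ℕ → R}

theorem psiNumber_eq (h : IsSeriesCoeff b nψ q) {m : ℕ} (hm : 1 ≤ m) : nψ m = b m 1 := by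
  simpa using (h m 1 le_rfl hm).symm

theorem congr_psiNumber (h : IsSeriesCoeff b nψ q) {nψ' : ℕ → R}
    (h' : ∀ m, 1 ≤ m → nψ m = nψ' m) : IsSeriesCoeff b nψ' q := by
  intro n k hk hkn
  rw [h n k hk hkn]
  congr 1
  exact Finset.prod_congr rfl fun i hi => h' _ (by rw [Finset.mem_range] at hi; omega)

theorem coeff_one (h : IsSeriesCoeff b nψ q) : IsSeriesCoeff b (b · 1) q :=
  h.congr_psiNumber fun _ hm => h.psiNumber_eq hm

end IsSeriesCoeff

end CommSemiring

section Field

variable {F : Type*} [Field F]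

theorem prod_range_sub_ne_zero {f : ℕ → F} (hf : ∀ m, 1 ≤ m → f m ≠ 0) {k n : ℕ} (hkn : k ≤ n) :
    ∏ i ∈ Finset.range k, f (n - i) ≠ 0 :=
  Finset.prod_ne_zero_iff.2 fun i hi => hf _ (by rw [Finset.mem_range] at hi; omega)

theorem exists_admissible_of_ne_zero {nψ : ℕ → F} (hnψ : ∀ n, nψ (n + 1) ≠ 0) :
    ∃ ψ : ℕ → F, ψ 0 = 1 ∧ (∀ n, ψ n ≠ 0) ∧ ∀ n, nψ (n + 1) = ψ n / ψ (n + 1) := by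
  have hprod (n : ℕ) : ∏ i ∈ Finset.range n, nψ (i + 1) ≠ 0 :=
    Finset.prod_ne_zero_iff.2 fun i _ => hnψ i
  refine ⟨fun n => (∏ i ∈ Finset.range n, nψ (i + 1))⁻¹, by simp, fun n => inv_ne_zero (hprod n),
    fun n => ?_⟩
  simp only [Finset.prod_range_succ]
  field_simp [hprod n, hnψ n]

theorem eq_of_div_succ_eq {ψ₁ ψ₂ : ℕ → F} (h0 : ψ₁ 0 = ψ₂ 0) (hψ₁ : ∀ n, ψ₁ n ≠ 0)
    (hψ₂ : ∀ n, ψ₂ n ≠ 0) (h : ∀ n, ψ₁ n / ψ₁ (n + 1) = ψ₂ n / ψ₂ (n + 1)) : ψ₁ = ψ₂ := by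
  funext n
  induction n with
  | zero => exact h0
  | succ n ih =>
    have hn := h n
    rw [ih, div_eq_div_iff (hψ₁ _) (hψ₂ _)] at hn
    exact (mul_left_cancel₀ (hψ₂ n) hn).symm

variable {b : ℕ → ℕ → F}

namespace IsSeriesCoeff

variable {q : ℕ → F}

theorem eq_div_mul (h : IsSeriesCoeff b (b · 1) q) (hb1 : ∀ m, 1 ≤ m → b m 1 ≠ 0) {n k : ℕ}
    (hk : 1 ≤ k) (hkn : k ≤ n) :
    b n k = (∏ i ∈ Finset.range k, b (n - i) 1) / (∏ i ∈ Finset.range k, b (k - i) 1) * b k k := by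
  rw [h n k hk hkn, h k k hk le_rfl]
  field_simp [prod_range_sub_ne_zero hb1 (le_refl k)]

theorem coeff_eq (h : IsSeriesCoeff b (b · 1) q) (hb1 : ∀ m, 1 ≤ m → b m 1 ≠ 0) {k : ℕ}
    (hk : 2 ≤ k) : q k = b k k / ∏ i ∈ Finset.range k, b (k - i) 1 := by
  rw [h k k (by omega) le_rfl, if_neg (by omega),
    mul_div_cancel_right₀ _ (prod_range_sub_ne_zero hb1 le_rfl)]

end IsSeriesCoeff

theorem isSeriesCoeff_of_eq_div_mul
    (h : ∀ n k, 1 ≤ k → k ≤ n →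
      b n k = (∏ i ∈ Finset.range k, b (n - i) 1) / (∏ i ∈ Finset.range k, b (k - i) 1) * b k k) :
    IsSeriesCoeff b (b · 1) fun k => b k k / ∏ i ∈ Finset.range k, b (k - i) 1 := by
  intro n k hk hkn
  rcases hk.eq_or_lt with rfl | hk2
  · simp
  · rw [if_neg hk2.ne', h n k hk hkn, div_mul_comm]

end Field

namespace Polynomial

variable {R : Type*} [CommSemiring R]

theorem coeff_sum_Icc_smul_X_pow_sub (f : ℕ → R) {n j : ℕ} (hj : j ∈ Finset.Icc 1 n) :
    (∑ k ∈ Finset.Icc 1 n, f k • (X : R[X]) ^ (n - k)).coeff (n - j) = f j := by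
  rw [finsetSum_coeff, Finset.sum_eq_single_of_mem j hj]
  · simp
  · intro k hk hkj
    simp only [Finset.mem_Icc] at hj hk
    simp only [coeff_smul, coeff_X_pow, smul_eq_mul, if_neg (show n - j ≠ n - k by omega),
      mul_zero]

/-- The `ψ`-derivative `∂_ψ` with `ψ`-numbers `nψ n = n_ψ`;
it kills constants only if `nψ 0 = 0`. -/
noncomputable def psiDeriv (nψ : ℕ → R) : R[X] →ₗ[R] R[X] :=
  lsum fun n => nψ n • monomial (n - 1)

theorem psiDeriv_X_pow (nψ : ℕ → R) (n : ℕ) : psiDeriv nψ (X ^ n) = nψ n • X ^ (n - 1) := by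
  simp [psiDeriv, ← monomial_one_right_eq_X_pow]

theorem psiDeriv_one {nψ : ℕ → R} (h0 : nψ 0 = 0) : psiDeriv nψ 1 = 0 := by
  simpa [h0] using psiDeriv_X_pow nψ 0

variable {D : R[X] →ₗ[R] R[X]} {nψ : ℕ → R}

theorem pow_apply_X_pow_of_apply_X_pow_succ (hD : ∀ n, D (X ^ (n + 1)) = nψ (n + 1) • X ^ n)
    {k n : ℕ} (hkn : k ≤ n) :
    (D ^ k) (X ^ n) = (∏ i ∈ Finset.range k, nψ (n - i)) • X ^ (n - k) := by
  induction k generalizing n with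
  | zero => simp
  | succ k ih =>
    obtain ⟨m, rfl⟩ : ∃ m, n = m + 1 := ⟨n - 1, by omega⟩
    rw [pow_succ, Module.End.mul_apply, hD m, map_smul, ih (by omega),
      Finset.prod_range_succ', smul_smul, mul_comm, Nat.sub_zero, Nat.add_sub_add_right]
    simp only [show ∀ i, m + 1 - (i + 1) = m - i by omega]

theorem series_apply_X_pow (hD : ∀ n, D (X ^ (n + 1)) = nψ (n + 1) • X ^ n) (q : ℕ → R)
    {n : ℕ} (hn : 1 ≤ n) :
    D (X ^ n) + ∑ k ∈ Finset.Icc 2 n, q k • (D ^ k) (X ^ n) =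
      ∑ k ∈ Finset.Icc 1 n,
        ((if k = 1 then 1 else q k) * ∏ i ∈ Finset.range k, nψ (n - i)) • X ^ (n - k) := by
  have hIcc : Finset.Icc 1 n = insert 1 (Finset.Icc 2 n) := by
    ext x; simp only [Finset.mem_Icc, Finset.mem_insert]; omega
  rw [hIcc, Finset.sum_insert (by simp)]
  congr 1
  · obtain ⟨m, rfl⟩ : ∃ m, n = m + 1 := ⟨n - 1, by omega⟩
    simp [hD m]
  · refine Finset.sum_congr rfl fun k hk => ?_
    simp only [Finset.mem_Icc] at hk
    rw [pow_apply_X_pow_of_apply_X_pow_succ hD hk.2, if_neg (by omega), smul_smul]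

theorem sum_eq_series_iff_isSeriesCoeff (hD : ∀ n, D (X ^ (n + 1)) = nψ (n + 1) • X ^ n)
    (hD1 : D 1 = 0) (b : ℕ → ℕ → R) (q : ℕ → R) :
    (∀ n, ∑ k ∈ Finset.Icc 1 n, b n k • X ^ (n - k) =
        D (X ^ n) + ∑ k ∈ Finset.Icc 2 n, q k • (D ^ k) (X ^ n)) ↔
      IsSeriesCoeff b nψ q := by
  constructor
  · intro h n k hk hkn
    have hcoeff := congrArg (coeff · (n - k)) ((h n).trans (series_apply_X_pow hD q (hk.trans hkn)))
    have hmem : k ∈ Finset.Icc 1 n := Finset.mem_Icc.2 ⟨hk, hkn⟩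
    simpa only [coeff_sum_Icc_smul_X_pow_sub _ hmem] using hcoeff
  · intro h n
    rcases Nat.eq_zero_or_pos n with rfl | hn
    · simp [hD1]
    · rw [series_apply_X_pow hD q hn]
      refine Finset.sum_congr rfl fun k hk => ?_
      obtain ⟨hk, hkn⟩ := Finset.mem_Icc.1 hk
      rw [h n k hk hkn]

end Polynomial

theorem generalized_diff_op_is_series_in_psi_derivative_iff_general
    (F : Type*) [Field F]
    (Q : Polynomial F →ₗ[F] Polynomial F)
    (b : ℕ → ℕ → F)
    (hQb : ∀ n : ℕ, Q (X ^ n) = ∑ k ∈ Finset.Icc 1 n, b n k • X ^ (n - k))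
    (hb1 : ∀ n : ℕ, 1 ≤ n → b n 1 ≠ 0) :
    ((∃ ψ nψ q : ℕ → F, ∃ D : Polynomial F →ₗ[F] Polynomial F,
        ψ 0 = 1 ∧ (∀ n, ψ n ≠ 0) ∧
        nψ 0 = 0 ∧ (∀ n, nψ (n + 1) = ψ n / ψ (n + 1)) ∧
        D 1 = 0 ∧ (∀ n : ℕ, D (X ^ (n + 1)) = nψ (n + 1) • X ^ n) ∧
        (∀ n : ℕ, Q (X ^ n) = D (X ^ n) + ∑ k ∈ Finset.Icc 2 n, q k • (D ^ k) (X ^ n)))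
      ↔
      (∀ n k : ℕ, 1 ≤ k → k ≤ n →
        b n k = ((∏ i ∈ Finset.range k, b (n - i) 1) /
                  (∏ i ∈ Finset.range k, b (k - i) 1)) * b k k))
    ∧
    (∀ ψ₁ nψ₁ q₁ : ℕ → F, ∀ D₁ : Polynomial F →ₗ[F] Polynomial F,
     ∀ ψ₂ nψ₂ q₂ : ℕ → F, ∀ D₂ : Polynomial F →ₗ[F] Polynomial F,
      (ψ₁ 0 = 1 ∧ (∀ n, ψ₁ n ≠ 0) ∧
        nψ₁ 0 = 0 ∧ (∀ n, nψ₁ (n + 1) = ψ₁ n / ψ₁ (n + 1)) ∧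
        D₁ 1 = 0 ∧ (∀ n : ℕ, D₁ (X ^ (n + 1)) = nψ₁ (n + 1) • X ^ n) ∧
        (∀ n : ℕ, Q (X ^ n) = D₁ (X ^ n) + ∑ k ∈ Finset.Icc 2 n, q₁ k • (D₁ ^ k) (X ^ n))) →
      (ψ₂ 0 = 1 ∧ (∀ n, ψ₂ n ≠ 0) ∧
        nψ₂ 0 = 0 ∧ (∀ n, nψ₂ (n + 1) = ψ₂ n / ψ₂ (n + 1)) ∧
        D₂ 1 = 0 ∧ (∀ n : ℕ, D₂ (X ^ (n + 1)) = nψ₂ (n + 1) • X ^ n) ∧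
        (∀ n : ℕ, Q (X ^ n) = D₂ (X ^ n) + ∑ k ∈ Finset.Icc 2 n, q₂ k • (D₂ ^ k) (X ^ n))) →
      ψ₁ = ψ₂ ∧ ∀ k : ℕ, 2 ≤ k → q₁ k = q₂ k) := by
  simp only [hQb]
  refine ⟨⟨fun ⟨ψ, nψ, q, D, _, _, _, _, hD1, hD, hser⟩ n k hk hkn => ?_, fun h => ?_⟩, ?_⟩
  · have hc := (sum_eq_series_iff_isSeriesCoeff hD hD1 b q).1 hser
    exact hc.coeff_one.eq_div_mul hb1 hk hkn
  · set nψ : ℕ → F := fun n => if n = 0 then 0 else b n 1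
    obtain ⟨ψ, hψ0, hψ, hnψ⟩ :=
      exists_admissible_of_ne_zero (nψ := nψ) fun n => hb1 (n + 1) n.succ_pos
    have hD (n : ℕ) : psiDeriv nψ (X ^ (n + 1)) = nψ (n + 1) • X ^ n := psiDeriv_X_pow nψ (n + 1)
    refine ⟨ψ, nψ, fun k => b k k / ∏ i ∈ Finset.range k, b (k - i) 1, psiDeriv nψ, hψ0, hψ,
      if_pos rfl, hnψ, psiDeriv_one (if_pos rfl), hD, ?_⟩
    refine (sum_eq_series_iff_isSeriesCoeff hD (psiDeriv_one (if_pos rfl)) b _).2 ?_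
    exact (isSeriesCoeff_of_eq_div_mul h).congr_psiNumber fun m hm => (if_neg (by omega)).symm
  · rintro ψ₁ nψ₁ q₁ D₁ ψ₂ nψ₂ q₂ D₂ ⟨hψ₁0, hψ₁, -, hnψ₁, hD₁1, hD₁, hser₁⟩
      ⟨hψ₂0, hψ₂, -, hnψ₂, hD₂1, hD₂, hser₂⟩
    have hc₁ := (sum_eq_series_iff_isSeriesCoeff hD₁ hD₁1 b q₁).1 hser₁
    have hc₂ := (sum_eq_series_iff_isSeriesCoeff hD₂ hD₂1 b q₂).1 hser₂
    refine ⟨eq_of_div_succ_eq (hψ₁0.trans hψ₂0.symm) hψ₁ hψ₂ fun n => ?_, fun k hk => ?_⟩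
    · rw [← hnψ₁, ← hnψ₂, hc₁.psiNumber_eq n.succ_pos, hc₂.psiNumber_eq n.succ_pos]
    · rw [hc₁.coeff_one.coeff_eq hb1 hk, hc₂.coeff_one.coeff_eq hb1 hk]

/-- Observation 2.1: a degree-lowering operator Q with
Q x^n = ∑_{k=1}^n b_{n,k} x^{n-k}, b_{n,1} ≠ 0, b_{1,1} = 1, is a formal series
∂_ψ + ∑_{k≥2} q_k ∂_ψ^k in some ψ-derivative iff b_{n,k} = C(n,k)_ψ b_{k,k}
(with n_ψ = b_{n,1}), and then q and ψ are unique. -/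
theorem generalized_diff_op_is_series_in_psi_derivative_iff
    (F : Type*) [Field F] [CharZero F]
    (Q : Polynomial F →ₗ[F] Polynomial F)
    (hQc : ∀ c : F, Q (C c) = 0)
    (hQdeg : ∀ p : Polynomial F, 1 ≤ p.natDegree →
      Q p ≠ 0 ∧ (Q p).natDegree = p.natDegree - 1)
    (b : ℕ → ℕ → F)
    (hQb : ∀ n : ℕ, Q (X ^ n) = ∑ k ∈ Finset.Icc 1 n, b n k • X ^ (n - k))
    (hb1 : ∀ n : ℕ, 1 ≤ n → b n 1 ≠ 0)
    (hb11 : b 1 1 = 1) :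
    ((∃ ψ nψ q : ℕ → F, ∃ D : Polynomial F →ₗ[F] Polynomial F,
        ψ 0 = 1 ∧ (∀ n, ψ n ≠ 0) ∧
        nψ 0 = 0 ∧ (∀ n, nψ (n + 1) = ψ n / ψ (n + 1)) ∧
        D 1 = 0 ∧ (∀ n : ℕ, D (X ^ (n + 1)) = nψ (n + 1) • X ^ n) ∧
        (∀ n : ℕ, Q (X ^ n) = D (X ^ n) + ∑ k ∈ Finset.Icc 2 n, q k • (D ^ k) (X ^ n)))
      ↔
      (∀ n k : ℕ, 1 ≤ k → k ≤ n →
        b n k = ((∏ i ∈ Finset.range k, b (n - i) 1) /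
                  (∏ i ∈ Finset.range k, b (k - i) 1)) * b k k))
    ∧
    (∀ ψ₁ nψ₁ q₁ : ℕ → F, ∀ D₁ : Polynomial F →ₗ[F] Polynomial F,
     ∀ ψ₂ nψ₂ q₂ : ℕ → F, ∀ D₂ : Polynomial F →ₗ[F] Polynomial F,
      (ψ₁ 0 = 1 ∧ (∀ n, ψ₁ n ≠ 0) ∧
        nψ₁ 0 = 0 ∧ (∀ n, nψ₁ (n + 1) = ψ₁ n / ψ₁ (n + 1)) ∧
        D₁ 1 = 0 ∧ (∀ n : ℕ, D₁ (X ^ (n + 1)) = nψ₁ (n + 1) • X ^ n) ∧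
        (∀ n : ℕ, Q (X ^ n) = D₁ (X ^ n) + ∑ k ∈ Finset.Icc 2 n, q₁ k • (D₁ ^ k) (X ^ n))) →
      (ψ₂ 0 = 1 ∧ (∀ n, ψ₂ n ≠ 0) ∧
        nψ₂ 0 = 0 ∧ (∀ n, nψ₂ (n + 1) = ψ₂ n / ψ₂ (n + 1)) ∧
        D₂ 1 = 0 ∧ (∀ n : ℕ, D₂ (X ^ (n + 1)) = nψ₂ (n + 1) • X ^ n) ∧
        (∀ n : ℕ, Q (X ^ n) = D₂ (X ^ n) + ∑ k ∈ Finset.Icc 2 n, q₂ k • (D₂ ^ k) (X ^ n))) →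
      ψ₁ = ψ₂ ∧ ∀ k : ℕ, 2 ≤ k → q₁ k = q₂ k) :=
  generalized_diff_op_is_series_in_psi_derivative_iff_general F Q b hQb hb1
end

section
/- The ψ-binomial coefficients obtained from the Fibonacci sequence are integers: for all n ≥ k ≥ 0, the Fibonomial coefficient C(n,k)_F = (F_n F_{n−1} ⋯ F_{n−k+1}) / (F_k F_{k−1} ⋯ F_1) is a natural number, where F_n denotes the n-th Fibonacci number (F_1 = F_2 = 1). -/
private def fibF (n : ℕ) : ℕ := ∏ i ∈ Finset.Icc 1 n, Nat.fib i

private lemma fibF_succ (n : ℕ) : fibF (n + 1) = Nat.fib (n + 1) * fibF n := by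
  unfold fibF
  rw [Finset.prod_Icc_succ_top (by omega), mul_comm]

private lemma fibF_dvd : ∀ n k : ℕ, k ≤ n → fibF k * fibF (n - k) ∣ fibF n := by
  intro n
  induction n with
  | zero => intro k hk; interval_cases k; simp [fibF]
  | succ m ih =>
    intro k hk
    rcases Nat.eq_zero_or_pos k with rfl | hk1
    · simp [fibF]
    rcases eq_or_lt_of_le hk with rfl | hlt
    · simp [fibF]
    obtain ⟨j, rfl⟩ : ∃ j, k = j + 1 := ⟨k - 1, by omega⟩
    have hjm : j + 1 ≤ m := by omega
    -- fib (m+1) = fib j * fib (m-j) + fib (j+1) * fib (m-j+1)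
    have hfib : Nat.fib (m + 1) =
        Nat.fib j * Nat.fib (m - j) + Nat.fib (j + 1) * Nat.fib (m - j + 1) := by
      have := Nat.fib_add j (m - j)
      rw [show j + (m - j) + 1 = m + 1 by omega] at this
      exact this
    have hsub : m + 1 - (j + 1) = m - j := by omega
    rw [hsub, fibF_succ m, hfib, add_mul]
    apply dvd_add
    · -- fibF (j+1) * fibF (m-j) ∣ fib j * fib (m-j) * fibF m
      have h1 : fibF (j + 1) * fibF (m - (j + 1)) ∣ fibF m := ih (j + 1) hjm
      have h2 : fibF (m - j) = Nat.fib (m - j) * fibF (m - (j + 1)) := by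
        rw [show m - j = (m - (j + 1)) + 1 by omega, fibF_succ,
          show m - (j + 1) + 1 = m - j by omega]
      rw [h2]
      calc fibF (j + 1) * (Nat.fib (m - j) * fibF (m - (j + 1)))
          = Nat.fib (m - j) * (fibF (j + 1) * fibF (m - (j + 1))) := by ring
        _ ∣ Nat.fib (m - j) * fibF m := mul_dvd_mul_left _ h1
        _ ∣ Nat.fib j * Nat.fib (m - j) * fibF m := ⟨Nat.fib j, by ring⟩
    · -- fibF (j+1) * fibF (m-j) ∣ fib (j+1) * fib (m-j+1) * fibF m
      have h1 : fibF j * fibF (m - j) ∣ fibF m := ih j (by omega)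
      calc fibF (j + 1) * fibF (m - j)
          = Nat.fib (j + 1) * (fibF j * fibF (m - j)) := by rw [fibF_succ]; ring
        _ ∣ Nat.fib (j + 1) * fibF m := mul_dvd_mul_left _ h1
        _ ∣ Nat.fib (j + 1) * Nat.fib (m - j + 1) * fibF m := ⟨Nat.fib (m - j + 1), by ring⟩

/-- the Fibonomial coefficients are integers: for k ≤ n the product
k_F!·(n−k)_F! divides n_F!, where n_F! = F_n F_{n−1} ⋯ F_1. -/
theorem fibonomial_is_integer :
    ∀ n k : ℕ, k ≤ n →
      ((∏ i ∈ Finset.Icc 1 k, Nat.fib i) * (∏ i ∈ Finset.Icc 1 (n - k), Nat.fib i)) ∣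
        (∏ i ∈ Finset.Icc 1 n, Nat.fib i) := by
  exact fibF_dvd
end

section
/- In the Graves-Heisenberg-Weyl representation {∂_ψ, x̂_ψ, id}, the general Leibniz rule holds: ∂_ψ^n ∘ x̂_ψ^m = ∑_{k≥0} C(n,k) C(m,k) k! · x̂_ψ^{m−k} ∘ ∂_ψ^{n−k}, where C(n,k) are ordinary binomial coefficients, for all n, m ≥ 0. -/
private lemma weyl_pow {A : Type*} [Ring A] (D M : A) (h : D * M = M * D + 1) :
    ∀ j : ℕ, D * M ^ j = M ^ j * D + j • M ^ (j - 1) := by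
  intro j
  induction j with
  | zero => simp
  | succ j ih =>
    rw [pow_succ, ← mul_assoc, ih, add_mul, mul_assoc, h, mul_add, mul_one,
      ← mul_assoc, ← pow_succ]
    cases j with
    | zero => simp
    | succ j =>
      simp only [Nat.succ_sub_one, smul_mul_assoc, ← pow_succ]
      rw [add_assoc, succ_nsmul (M ^ (j + 1)) (j + 1), add_comm (M ^ (j + 1))]

private lemma weyl_leibniz {A : Type*} [Ring A] (D M : A) (h : D * M = M * D + 1) :
    ∀ n m : ℕ, D ^ n * M ^ m =
      ∑ k ∈ Finset.range (n + 1),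
        (n.choose k * m.choose k * k.factorial) • (M ^ (m - k) * D ^ (n - k)) := by
  intro n
  induction n with
  | zero => intro m; simp
  | succ n ih =>
    intro m
    have key : ∀ k : ℕ, ((n+1).choose (k+1) * m.choose (k+1) * (k+1).factorial) =
        (n.choose (k+1) * m.choose (k+1) * (k+1).factorial)
        + (n.choose k * m.choose k * k.factorial) * (m - k) := by
      intro k
      have h3 : m.choose (k+1) * (k+1) = m.choose k * (m - k) := Nat.choose_succ_right_eq m k
      have h4 : n.choose k * m.choose (k+1) * (k+1).factorial
          = n.choose k * m.choose k * k.factorial * (m-k) := by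
        rw [Nat.factorial_succ,
          show n.choose k * m.choose (k+1) * ((k+1) * k.factorial)
            = n.choose k * (m.choose (k+1) * (k+1)) * k.factorial from by ring, h3]
        ring
      rw [Nat.choose_succ_succ, add_mul, add_mul, h4]
      ring
    have expand : D ^ (n + 1) * M ^ m = D * (D ^ n * M ^ m) := by
      rw [pow_succ', mul_assoc]
    rw [expand, ih m, Finset.mul_sum]
    have step : ∀ k ∈ Finset.range (n + 1),
        D * ((n.choose k * m.choose k * k.factorial) • (M ^ (m - k) * D ^ (n - k))) =
        (n.choose k * m.choose k * k.factorial) • (M ^ (m - k) * D ^ (n + 1 - k))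
        + ((n.choose k * m.choose k * k.factorial) * (m - k)) •
            (M ^ (m - (k + 1)) * D ^ (n - k)) := by
      intro k hk
      rw [Finset.mem_range] at hk
      have hDM : D * (M ^ (m - k) * D ^ (n - k))
          = M ^ (m - k) * D ^ (n + 1 - k) + (m - k) • (M ^ (m - (k + 1)) * D ^ (n - k)) := by
        rw [← mul_assoc, weyl_pow D M h, add_mul, mul_assoc, ← pow_succ',
          show n - k + 1 = n + 1 - k from by omega, smul_mul_assoc,
          show m - k - 1 = m - (k + 1) from by omega]
      rw [mul_smul_comm, hDM, smul_add, smul_smul]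
    rw [Finset.sum_congr rfl step, Finset.sum_add_distrib]
    symm
    rw [Finset.sum_range_succ']
    have key' : ∀ k ∈ Finset.range (n+1),
        ((n+1).choose (k+1) * m.choose (k+1) * (k+1).factorial) •
          (M ^ (m - (k+1)) * D ^ (n + 1 - (k+1)))
        = (n.choose (k+1) * m.choose (k+1) * (k+1).factorial) •
            (M ^ (m - (k+1)) * D ^ (n + 1 - (k+1)))
          + (n.choose k * m.choose k * k.factorial * (m - k)) •
            (M ^ (m - (k+1)) * D ^ (n - k)) := by
      intro k hk
      rw [show n + 1 - (k+1) = n - k from by omega, key k, add_smul]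
    rw [Finset.sum_congr rfl key', Finset.sum_add_distrib]
    have e1 : (∑ k ∈ Finset.range (n+1),
          (n.choose (k+1) * m.choose (k+1) * (k+1).factorial) •
            (M ^ (m - (k+1)) * D ^ (n + 1 - (k+1))))
        + ((n+1).choose 0 * m.choose 0 * Nat.factorial 0) • (M ^ (m - 0) * D ^ (n + 1 - 0))
        = ∑ k ∈ Finset.range (n+1),
          (n.choose k * m.choose k * k.factorial) • (M ^ (m - k) * D ^ (n + 1 - k)) := by
      have hs := Finset.sum_range_succ'
        (fun k => (n.choose k * m.choose k * k.factorial) • (M ^ (m - k) * D ^ (n + 1 - k)))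
        (n + 1)
      rw [Finset.sum_range_succ] at hs
      simp only [Nat.choose_succ_self, Nat.zero_mul, zero_mul, zero_smul, add_zero] at hs
      simpa using hs.symm
    rw [add_right_comm, e1]

open Polynomial

/-- general Leibniz rule in the GHW representation {∂_ψ, x̂_ψ, id}:
∂_ψ^n ∘ x̂_ψ^m = ∑_k C(n,k) C(m,k) k! · x̂_ψ^{m−k} ∘ ∂_ψ^{n−k}. -/
theorem psi_GHW_general_Leibniz
    (F : Type*) [Field F] [CharZero F]
    (ψ : ℕ → F) (hψ0 : ψ 0 = 1) (hψ : ∀ n, ψ n ≠ 0)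
    (nψ : ℕ → F) (hnψ0 : nψ 0 = 0) (hnψ : ∀ n, nψ (n + 1) = ψ n / ψ (n + 1))
    (D M : Module.End F (Polynomial F))
    (hD1 : D 1 = 0)
    (hD : ∀ n : ℕ, D (X ^ (n + 1)) = nψ (n + 1) • X ^ n)
    (hM : ∀ n : ℕ, M (X ^ n) = (((n : F) + 1) / nψ (n + 1)) • X ^ (n + 1)) :
    ∀ n m : ℕ,
      D ^ n * M ^ m =
        ∑ k ∈ Finset.range (min n m + 1),
          (n.choose k * m.choose k * k.factorial) • (M ^ (m - k) * D ^ (n - k)) := by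
  have hnψne : ∀ i : ℕ, nψ (i + 1) ≠ 0 := by
    intro i
    rw [hnψ i]
    exact div_ne_zero (hψ i) (hψ (i + 1))
  have hbasis : ∀ i : ℕ, (D * M) (X ^ i : Polynomial F) = (M * D + 1) (X ^ i) := by
    intro i
    have lhs : (D * M) (X ^ i : Polynomial F) = ((i : F) + 1) • X ^ i := by
      simp only [Module.End.mul_apply, hM i, map_smul, hD i, smul_smul]
      rw [div_mul_cancel₀ _ (hnψne i)]
    rw [lhs]
    cases i with
    | zero =>
      simp only [pow_zero, LinearMap.add_apply, Module.End.mul_apply, hD1, map_zero,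
        Module.End.one_apply]
      simp
    | succ j =>
      simp only [LinearMap.add_apply, Module.End.mul_apply, hD j, map_smul, hM j,
        Module.End.one_apply, smul_smul]
      rw [show nψ (j + 1) * (((j : F) + 1) / nψ (j + 1)) = (j : F) + 1 from by
        rw [mul_div_assoc']; exact mul_div_cancel_left₀ _ (hnψne j)]
      push_cast
      rw [add_smul, one_smul]
  have hcomm : D * M = M * D + 1 := by
    apply LinearMap.ext
    intro p
    induction p using Polynomial.induction_on' with
    | add p q hp hq => simp only [map_add]; rw [hp, hq]
    | monomial i a =>
      rw [← Polynomial.C_mul_X_pow_eq_monomial, ← smul_eq_C_mul, map_smul, map_smul,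
        hbasis i]
  intro n m
  rw [weyl_leibniz D M hcomm n m]
  symm
  apply Finset.sum_subset
  · intro x hx
    rw [Finset.mem_range] at *
    omega
  · intro x hx hnx
    rw [Finset.mem_range] at *
    have hmx : m < x := by omega
    rw [Nat.choose_eq_zero_of_lt hmx]
    simp
end

section
/- (*-ψ Leibniz rule) Define the ψ-product on monomials by f(x) *_ψ x^n := f(x̂_ψ)(x^n) and ψ-powers x^{n*_ψ} = (n!/n_ψ!) x^n. Then for every polynomial f and every n ≥ 1: ∂_ψ(f *_ψ x^{n*_ψ}) = (Df) *_ψ x^{n*_ψ} + f *_ψ (∂_ψ x^{n*_ψ}), where D is the ordinary derivative. -/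
open Polynomial

/-- *_ψ Leibniz rule: with f *_ψ g := f(x̂_ψ)(g) and ψ-powers
x^{n*_ψ} = (n!/n_ψ!) x^n, one has
∂_ψ(f *_ψ x^{n*_ψ}) = (Df) *_ψ x^{n*_ψ} + f *_ψ (∂_ψ x^{n*_ψ}) for n ≥ 1. -/
theorem star_psi_Leibniz
    (F : Type*) [Field F] [CharZero F]
    (ψ : ℕ → F) (hψ0 : ψ 0 = 1) (hψ : ∀ n, ψ n ≠ 0)
    (nψ : ℕ → F) (hnψ0 : nψ 0 = 0) (hnψ : ∀ n, nψ (n + 1) = ψ n / ψ (n + 1))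
    (ψfact : ℕ → F) (hf0 : ψfact 0 = 1)
    (hf : ∀ n, ψfact (n + 1) = ψfact n * nψ (n + 1))
    (D M : Module.End F (Polynomial F))
    (hD1 : D 1 = 0)
    (hD : ∀ n : ℕ, D (X ^ (n + 1)) = nψ (n + 1) • X ^ n)
    (hM : ∀ n : ℕ, M (X ^ n) = (((n : F) + 1) / nψ (n + 1)) • X ^ (n + 1)) :
    ∀ f : Polynomial F, ∀ n : ℕ, 1 ≤ n →
      D ((aeval M f) (((n.factorial : F) / ψfact n) • X ^ n)) =
        (aeval M (derivative f)) (((n.factorial : F) / ψfact n) • X ^ n) +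
          (aeval M f) (D (((n.factorial : F) / ψfact n) • X ^ n)) := by
  -- nψ (n+1) ≠ 0
  have hnψne : ∀ n : ℕ, nψ (n + 1) ≠ 0 := by
    intro n
    rw [hnψ]
    exact div_ne_zero (hψ n) (hψ (n + 1))
  -- commutator identity: D ∘ M = 1 + M ∘ D
  have comm : ∀ p : Polynomial F, D (M p) = p + M (D p) := by
    intro p
    induction p using Polynomial.induction_on' with
    | add p q hp hq => simp [map_add, hp, hq]; abel
    | monomial k a =>
        have hmono : (monomial k a : Polynomial F) = a • X ^ k := by
          rw [smul_eq_C_mul, C_mul_X_pow_eq_monomial]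
        have base : D (M (X ^ k : Polynomial F)) = X ^ k + M (D (X ^ k)) := by
          rw [hM k, map_smul, hD k, smul_smul, div_mul_cancel₀ _ (hnψne k)]
          cases k with
          | zero => rw [pow_zero, hD1, map_zero, add_zero]; norm_num
          | succ m =>
              rw [hD m, map_smul, hM m, smul_smul,
                mul_div_cancel₀ _ (hnψne m)]
              push_cast
              module
        rw [hmono, map_smul, map_smul, map_smul, map_smul, base, smul_add]
  -- operator identity by induction on f
  have key : ∀ f : Polynomial F, ∀ p : Polynomial F,
      D ((aeval M f) p) = (aeval M (derivative f)) p + (aeval M f) (D p) := by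
    intro f
    induction f using Polynomial.induction_on with
    | C a => intro p; simp [aeval_C, Module.algebraMap_end_apply, map_smul]
    | add f g hfi hgi =>
        intro p
        simp only [map_add, LinearMap.add_apply, hfi p, hgi p]
        abel
    | monomial k a hki =>
        intro p
        have h1 : (aeval M (C a * X ^ (k + 1))) p
            = (aeval M (C a * X ^ k)) (M p) := by
          simp [pow_succ, mul_assoc, Module.End.mul_apply]
        rw [h1, hki (M p), comm p, map_add]
        have h2 : derivative (C a * X ^ (k + 1))
            = derivative (C a * X ^ k) * X + C a * X ^ k := by
          simp [derivative_C_mul, derivative_X_pow, pow_succ]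
          ring
        have h3 : (aeval M (derivative (C a * X ^ k) * X)) p
            = (aeval M (derivative (C a * X ^ k))) (M p) := by
          simp [Module.End.mul_apply]
        have h4 : (aeval M (C a * X ^ (k + 1))) (D p)
            = (aeval M (C a * X ^ k)) (M (D p)) := by
          simp [pow_succ, mul_assoc, Module.End.mul_apply]
        rw [h2, map_add, LinearMap.add_apply, h3, h4]
        abel
  intro f n _
  exact key f _
end

section
/- (Expansion theorem) Let Q̂ be a linear operator on F[x] that lowers the degree of every polynomial by one. Then every linear operator T̂: F[x] → F[x] admits a unique expansion T̂ = ∑_{n≥0} q_n(x̂) Q̂^n, where each q_n is a polynomial, x̂ is multiplication by x, and the sum is locally finite (on each polynomial only finitely many terms are nonzero). -/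
open Polynomial

/-!
Applying the expansion to `X ^ n` gives the triangular system
`T (X ^ n) = ∑ k ≤ n, q k * (Q ^ k) (X ^ n)`, whose diagonal entries `(Q ^ n) (X ^ n)` are nonzero
constants because `Q` lowers degrees by exactly one; so the system determines each `q n` from
`q 0, …, q (n - 1)`. Since `(Q ^ k) p = 0` once `k > deg p`, the truncation of the expansion at
any `N ≥ deg p` has the same value at `p`; the truncation is linear, so the monomial equations
give the expansion for every `p`. -/

namespace Polynomial

structure LowersDegree {R : Type*} [Semiring R] (Q : R[X] →ₗ[R] R[X]) : Prop where
  map_C : ∀ c : R, Q (C c) = 0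
  natDegree_map : ∀ p : R[X], 1 ≤ p.natDegree → Q p ≠ 0 ∧ (Q p).natDegree = p.natDegree - 1

theorem linearMap_apply_eq_of_apply_X_pow_eq {R M : Type*} [Semiring R] [AddCommMonoid M]
    [Module R M] {f g : R[X] →ₗ[R] M} {p : R[X]} (h : ∀ m ≤ p.natDegree, f (X ^ m) = g (X ^ m)) :
    f p = g p := by
  rw [p.as_sum_range' _ p.natDegree.lt_succ_self, map_sum, map_sum]
  refine Finset.sum_congr rfl fun m hm => ?_
  rw [← smul_X_eq_monomial, map_smul, map_smul, h m (Nat.lt_succ_iff.mp (Finset.mem_range.mp hm))]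

-- Dividing by the constant `(Q ^ n) (X ^ n)` solves the `n`-th monomial equation for `q n`.
noncomputable def expansionCoeff {F : Type*} [Field F] (Q T : F[X] →ₗ[F] F[X]) : ℕ → F[X]
  | n => (T (X ^ n) - ∑ k : Fin n, expansionCoeff Q T k * (Q ^ (k : ℕ)) (X ^ n)) *
      C (((Q ^ n) (X ^ n)).coeff 0)⁻¹

namespace LowersDegree

section Semiring

variable {R : Type*} [Semiring R] {Q : R[X] →ₗ[R] R[X]}

theorem pow_apply_ne_zero_and_natDegree (hQ : LowersDegree Q) {n : ℕ} {p : R[X]} (hp : p ≠ 0)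
    (hn : n ≤ p.natDegree) : (Q ^ n) p ≠ 0 ∧ ((Q ^ n) p).natDegree = p.natDegree - n := by
  induction n generalizing p with
  | zero => simpa using hp
  | succ n ih =>
    obtain ⟨hQp, hdeg⟩ := hQ.natDegree_map p (by omega)
    obtain ⟨hne, hdeg'⟩ := ih hQp (by omega)
    rw [pow_succ, Module.End.mul_apply]
    exact ⟨hne, by omega⟩

theorem pow_apply_eq_zero_of_natDegree_lt (hQ : LowersDegree Q) {n : ℕ} {p : R[X]}
    (hn : p.natDegree < n) : (Q ^ n) p = 0 := by
  obtain rfl | hp := eq_or_ne p 0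
  · simp
  obtain ⟨k, rfl⟩ := Nat.exists_eq_add_of_lt hn
  have hconst : ((Q ^ p.natDegree) p).natDegree = 0 := by
    have := (hQ.pow_apply_ne_zero_and_natDegree hp le_rfl).2
    omega
  rw [show p.natDegree + k + 1 = k + 1 + p.natDegree by omega, pow_add, Module.End.mul_apply,
    eq_C_of_natDegree_eq_zero hconst, pow_succ, Module.End.mul_apply, hQ.map_C, map_zero]

theorem pow_apply_X_pow_eq_C (hQ : LowersDegree Q) (n : ℕ) :
    (Q ^ n) (X ^ n) = C (((Q ^ n) (X ^ n)).coeff 0) := by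
  nontriviality R
  apply eq_C_of_natDegree_eq_zero
  have := (hQ.pow_apply_ne_zero_and_natDegree (monic_X_pow n).ne_zero (natDegree_X_pow n).ge).2
  simpa using this

theorem pow_apply_X_pow_ne_zero [Nontrivial R] (hQ : LowersDegree Q) (n : ℕ) :
    (Q ^ n) (X ^ n) ≠ 0 :=
  (hQ.pow_apply_ne_zero_and_natDegree (monic_X_pow n).ne_zero (natDegree_X_pow n).ge).1

theorem sum_range_mul_pow_apply_eq_of_le (hQ : LowersDegree Q) (q : ℕ → R[X]) {p : R[X]}
    {M N : ℕ} (hN : p.natDegree < N) (hNM : N ≤ M) :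
    ∑ n ∈ Finset.range M, q n * (Q ^ n) p = ∑ n ∈ Finset.range N, q n * (Q ^ n) p := by
  refine (Finset.sum_subset (Finset.range_subset_range.mpr hNM) fun n _ hn => ?_).symm
  rw [hQ.pow_apply_eq_zero_of_natDegree_lt (by simp at hn; omega), mul_zero]

end Semiring

section Ring

variable {R : Type*} [Ring R] [IsDomain R] {Q : R[X] →ₗ[R] R[X]}

theorem eq_of_sum_mul_pow_apply_X_pow_eq (hQ : LowersDegree Q) {q q' : ℕ → R[X]}
    (h : ∀ n, ∑ k ∈ Finset.range (n + 1), q k * (Q ^ k) (X ^ n) =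
      ∑ k ∈ Finset.range (n + 1), q' k * (Q ^ k) (X ^ n)) : q = q' := by
  funext n
  induction n using Nat.strong_induction_on with
  | _ n ih =>
    have hn := h n
    rw [Finset.sum_range_succ, Finset.sum_range_succ,
      Finset.sum_congr rfl fun k hk => by rw [ih k (Finset.mem_range.mp hk)]] at hn
    exact mul_right_cancel₀ (hQ.pow_apply_X_pow_ne_zero n) (add_left_cancel hn)

end Ring

section CommSemiring

variable {R : Type*} [CommSemiring R] {Q : R[X] →ₗ[R] R[X]}

theorem apply_eq_sum_of_apply_X_pow (hQ : LowersDegree Q) {T : R[X] →ₗ[R] R[X]} {q : ℕ → R[X]}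
    (h : ∀ n, T (X ^ n) = ∑ k ∈ Finset.range (n + 1), q k * (Q ^ k) (X ^ n)) (p : R[X]) :
    T p = ∑ n ∈ Finset.range (p.natDegree + 1), q n * (Q ^ n) p := by
  let S : R[X] →ₗ[R] R[X] :=
    ∑ n ∈ Finset.range (p.natDegree + 1), LinearMap.mulLeft R (q n) ∘ₗ Q ^ n
  have hS (r : R[X]) : S r = ∑ n ∈ Finset.range (p.natDegree + 1), q n * (Q ^ n) r := by
    simp [S]
  rw [← hS]
  refine linearMap_apply_eq_of_apply_X_pow_eq fun m hm => ?_
  rw [h, hS]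
  exact (hQ.sum_range_mul_pow_apply_eq_of_le q
    ((natDegree_X_pow_le m).trans_lt (Nat.lt_add_one m)) (by omega)).symm

end CommSemiring

section Field

variable {F : Type*} [Field F] {Q : F[X] →ₗ[F] F[X]}

theorem apply_X_pow_eq_sum_expansionCoeff (hQ : LowersDegree Q) (T : F[X] →ₗ[F] F[X]) (n : ℕ) :
    T (X ^ n) = ∑ k ∈ Finset.range (n + 1), expansionCoeff Q T k * (Q ^ k) (X ^ n) := by
  have hc := hQ.pow_apply_X_pow_ne_zero n
  rw [hQ.pow_apply_X_pow_eq_C, ne_eq, C_eq_zero] at hc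
  rw [Finset.sum_range_succ, expansionCoeff.eq_1,
    Fin.sum_univ_eq_sum_range (fun k => expansionCoeff Q T k * (Q ^ k) (X ^ n)),
    hQ.pow_apply_X_pow_eq_C n, coeff_C_zero, mul_assoc, ← C_mul, inv_mul_cancel₀ hc, C_1,
    mul_one, add_sub_cancel]

end Field

end LowersDegree

end Polynomial

theorem expansion_theorem_general
    (F : Type*) [Field F]
    (Qh : Polynomial F →ₗ[F] Polynomial F)
    (hQc : ∀ c : F, Qh (C c) = 0)
    (hQdeg : ∀ p : Polynomial F, 1 ≤ p.natDegree →
      Qh p ≠ 0 ∧ (Qh p).natDegree = p.natDegree - 1) :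
    ∀ T : Polynomial F →ₗ[F] Polynomial F,
      ∃! q : ℕ → Polynomial F,
        ∀ p : Polynomial F,
          T p = ∑ n ∈ Finset.range (p.natDegree + 1), q n * (Qh ^ n) p := by
  intro T
  have hQ : LowersDegree Qh := ⟨hQc, hQdeg⟩
  refine ⟨expansionCoeff Qh T,
    hQ.apply_eq_sum_of_apply_X_pow (hQ.apply_X_pow_eq_sum_expansionCoeff T), fun q hq => ?_⟩
  refine hQ.eq_of_sum_mul_pow_apply_X_pow_eq fun n => ?_
  rw [← hQ.apply_X_pow_eq_sum_expansionCoeff T, hq, natDegree_X_pow]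

/-- Expansion theorem: if Q̂ lowers the degree of every polynomial by
one, then every linear operator T̂ on F[x] has a unique locally finite expansion
T̂ = ∑_{n≥0} q_n(x̂) Q̂^n with polynomial coefficients q_n. -/
theorem expansion_theorem
    (F : Type*) [Field F] [CharZero F]
    (Qh : Polynomial F →ₗ[F] Polynomial F)
    (hQc : ∀ c : F, Qh (C c) = 0)
    (hQdeg : ∀ p : Polynomial F, 1 ≤ p.natDegree →
      Qh p ≠ 0 ∧ (Qh p).natDegree = p.natDegree - 1) :
    ∀ T : Polynomial F →ₗ[F] Polynomial F,
      ∃! q : ℕ → Polynomial F,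
        ∀ p : Polynomial F,
          T p = ∑ n ∈ Finset.range (p.natDegree + 1), q n * (Qh ^ n) p :=
  expansion_theorem_general F Qh hQc hQdeg
end

section
/- (Orthogonality of Sheffer ψ-sequences) Let Q be a generalized difference-tial operator with ψ-basic sequence {q_n}, and let {s_n} be a Sheffer Q-ψ-sequence (Q s_n = n_ψ s_{n−1}, deg s_n = n, s_0 = c ≠ 0), with s_n = S^{-1} q_n for an invertible operator S commuting with Q. Define the bilinear form (f, g)_{Q,S} := [(Wf)(Q) S g](0), where W is the linear map sending s_n to x^n and (Wf)(Q) substitutes Q into the polynomial Wf. Then (s_k, s_n)_{Q,S} = n_ψ! · δ_{k,n}. -/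
open Polynomial

/-!
Iterating `Q q_{n+1} = n_ψ q_n` gives `Q^k q_{n+k} = (n+k)_ψ ⋯ (n+1)_ψ q_n`, and `Q^k q_n = 0`
for `k > n` because `Q` kills the constant `q_0 = 1`. Since `W s_k = x^k` and `S s_n = q_n`, the
form `(s_k, s_n)_{Q,S}` is the value at `0` of `Q^k q_n`: it vanishes for `k < n` because
`q_{n-k}(0) = 0`, vanishes for `k > n`, and equals `n_ψ! q_0(0) = n_ψ!` for `k = n`.
-/

section IteratedLowering

open Finset

variable {R M : Type*} [CommSemiring R] [AddCommMonoid M] [Module R M]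
  {Q : Module.End R M} {q : ℕ → M} {c : ℕ → R}

theorem pow_apply_add_eq_prod_smul (hQq : ∀ n, Q (q (n + 1)) = c (n + 1) • q n) (k n : ℕ) :
    (Q ^ k) (q (n + k)) = (∏ i ∈ range k, c (n + i + 1)) • q n := by
  induction k with
  | zero => simp
  | succ k ih =>
    rw [pow_succ, Module.End.mul_apply, ← add_assoc, hQq, map_smul, ih, smul_smul,
      prod_range_succ, mul_comm]

theorem pow_apply_eq_zero_of_lt (hQq : ∀ n, Q (q (n + 1)) = c (n + 1) • q n)
    (hQ0 : Q (q 0) = 0) {k n : ℕ} (h : n < k) : (Q ^ k) (q n) = 0 := by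
  obtain ⟨m, rfl⟩ := Nat.exists_eq_add_of_lt h
  have hQn := pow_apply_add_eq_prod_smul hQq n 0
  rw [zero_add] at hQn
  rw [add_assoc, add_comm, pow_add, Module.End.mul_apply, hQn, map_smul, pow_succ,
    Module.End.mul_apply, hQ0, map_zero, smul_zero]

end IteratedLowering

theorem sheffer_orthogonality_general
    (F : Type*) [Field F]
    (nψ : ℕ → F)
    (ψfact : ℕ → F) (hf0 : ψfact 0 = 1)
    (hf : ∀ n, ψfact (n + 1) = ψfact n * nψ (n + 1))
    (Q : Module.End F (Polynomial F))
    (hQc : ∀ c : F, Q (C c) = 0)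
    (qs : ℕ → Polynomial F)
    (hq0 : qs 0 = 1)
    (hqeval : ∀ n : ℕ, (qs (n + 1)).eval 0 = 0)
    (hQq : ∀ n : ℕ, Q (qs (n + 1)) = nψ (n + 1) • qs n)
    (S : Module.End F (Polynomial F))
    (s : ℕ → Polynomial F) (hs : ∀ n, S (s n) = qs n)
    (W : Polynomial F →ₗ[F] Polynomial F)
    (hW : ∀ n : ℕ, W (s n) = X ^ n) :
    ∀ k n : ℕ,
      ((aeval Q (W (s k))) (S (s n))).eval 0 = if k = n then ψfact n else 0 := by
  intro k n
  rw [hW k, hs n, map_pow, aeval_X]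
  rcases lt_trichotomy k n with hkn | rfl | hnk
  · obtain ⟨m, rfl⟩ := Nat.exists_eq_add_of_lt hkn
    rw [if_neg (by omega), show k + m + 1 = m + 1 + k by omega,
      pow_apply_add_eq_prod_smul hQq, eval_smul, hqeval, smul_zero]
  · have hfact : ∏ i ∈ Finset.range k, nψ (0 + i + 1) = ψfact k :=
      Finset.prod_range_induction _ _ hf0 k fun j _ => by rw [hf, zero_add]
    have hQk := pow_apply_add_eq_prod_smul hQq k 0
    rw [zero_add] at hQk
    rw [if_pos rfl, hQk, hfact, hq0, eval_smul, eval_one, smul_eq_mul, mul_one]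
  · have hQ0 : Q (qs 0) = 0 := by simpa [hq0] using hQc 1
    rw [if_neg (by omega), pow_apply_eq_zero_of_lt hQq hQ0 hnk, eval_zero]

/-- orthogonality of Sheffer ψ-sequences:
(s_k, s_n)_{Q,S} = n_ψ! · δ_{k,n} for the bilinear form
(f,g)_{Q,S} = [(Wf)(Q) S g](0). -/
theorem sheffer_orthogonality
    (F : Type*) [Field F] [CharZero F]
    (ψ : ℕ → F) (hψ0 : ψ 0 = 1) (hψ : ∀ n, ψ n ≠ 0)
    (nψ : ℕ → F) (hnψ0 : nψ 0 = 0) (hnψ : ∀ n, nψ (n + 1) = ψ n / ψ (n + 1))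
    (ψfact : ℕ → F) (hf0 : ψfact 0 = 1)
    (hf : ∀ n, ψfact (n + 1) = ψfact n * nψ (n + 1))
    (Q : Module.End F (Polynomial F))
    (hQc : ∀ c : F, Q (C c) = 0)
    (hQdeg : ∀ p : Polynomial F, 1 ≤ p.natDegree →
      Q p ≠ 0 ∧ (Q p).natDegree = p.natDegree - 1)
    (qs : ℕ → Polynomial F)
    (hqdeg : ∀ n, (qs n).degree = (n : ℕ))
    (hq0 : qs 0 = 1)
    (hqeval : ∀ n : ℕ, (qs (n + 1)).eval 0 = 0)
    (hQq : ∀ n : ℕ, Q (qs (n + 1)) = nψ (n + 1) • qs n)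
    (S : Module.End F (Polynomial F)) (hS : IsUnit S)
    (hSQ : S * Q = Q * S)
    (s : ℕ → Polynomial F) (hs : ∀ n, S (s n) = qs n)
    (hs0 : (s 0) ≠ 0)
    (W : Polynomial F →ₗ[F] Polynomial F)
    (hW : ∀ n : ℕ, W (s n) = X ^ n) :
    ∀ k n : ℕ,
      ((aeval Q (W (s k))) (S (s n))).eval 0 = if k = n then ψfact n else 0 :=
  sheffer_orthogonality_general F nψ ψfact hf0 hf Q hQc qs hq0 hqeval hQq S s hs W hW
end

section
/- If n_ψ > 0 for all n ≥ 1 (over the reals), then the bilinear form (f, g)_{Q,S} = [(Wf)(Q) S g]_{x=0} associated with a Sheffer Q-ψ-sequence {s_n} is a positive definite inner product on ℝ[x]. -/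
open Polynomial

/-- over ℝ, if n_ψ > 0 for all n ≥ 1 then the bilinear form
(f,g)_{Q,S} = [(Wf)(Q) S g](0) associated with a Sheffer Q-ψ-sequence is a
positive definite (symmetric) inner product on ℝ[x]. -/
theorem sheffer_form_positive_definite
    (ψ : ℕ → ℝ) (hψ0 : ψ 0 = 1) (hψ : ∀ n, ψ n ≠ 0)
    (nψ : ℕ → ℝ) (hnψ0 : nψ 0 = 0) (hnψ : ∀ n, nψ (n + 1) = ψ n / ψ (n + 1))
    (hpos : ∀ n : ℕ, 0 < nψ (n + 1))
    (Q : Module.End ℝ (Polynomial ℝ))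
    (hQc : ∀ c : ℝ, Q (C c) = 0)
    (hQdeg : ∀ p : Polynomial ℝ, 1 ≤ p.natDegree →
      Q p ≠ 0 ∧ (Q p).natDegree = p.natDegree - 1)
    (qs : ℕ → Polynomial ℝ)
    (hqdeg : ∀ n, (qs n).degree = (n : ℕ))
    (hq0 : qs 0 = 1)
    (hqeval : ∀ n : ℕ, (qs (n + 1)).eval 0 = 0)
    (hQq : ∀ n : ℕ, Q (qs (n + 1)) = nψ (n + 1) • qs n)
    (S : Module.End ℝ (Polynomial ℝ)) (hS : IsUnit S)
    (hSQ : S * Q = Q * S)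
    (s : ℕ → Polynomial ℝ) (hs : ∀ n, S (s n) = qs n)
    (W : Polynomial ℝ →ₗ[ℝ] Polynomial ℝ)
    (hW : ∀ n : ℕ, W (s n) = X ^ n) :
    (∀ f g : Polynomial ℝ,
        ((aeval Q (W f)) (S g)).eval 0 = ((aeval Q (W g)) (S f)).eval 0) ∧
    (∀ f : Polynomial ℝ, f ≠ 0 → 0 < ((aeval Q (W f)) (S f)).eval 0) := by
  classical
  set c : ℕ → ℝ := fun n => ∏ i ∈ Finset.range n, nψ (i + 1) with hc
  have hcpos : ∀ n, 0 < c n := fun n => Finset.prod_pos (fun i _ => hpos i)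
  -- iterated action of Q on the basic sequence
  have L1 : ∀ k m, (Q ^ k) (qs (m + k)) =
      (∏ i ∈ Finset.range k, nψ (m + i + 1)) • qs m := by
    intro k
    induction k with
    | zero => intro m; simp
    | succ k ih =>
      intro m
      have hp : Q ^ (k + 1) = Q ^ k * Q := pow_succ Q k
      rw [hp, Module.End.mul_apply]
      have : Q (qs (m + (k + 1))) = nψ (m + k + 1) • qs (m + k) := by
        have := hQq (m + k)
        simpa [Nat.add_assoc] using this
      rw [this, map_smul, ih m, smul_smul, Finset.prod_range_succ]
      congr 1
      ring
  have L2 : ∀ n k, ((Q ^ k) (qs n)).eval 0 = if k = n then c n else 0 := by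
    intro n k
    rcases lt_trichotomy k n with h | h | h
    · have hd : n = (n - k - 1 + 1) + k := by omega
      rw [if_neg (by omega)]
      rw [hd, L1 k (n - k - 1 + 1)]
      simp [hqeval]
    · subst h
      have := L1 k 0
      simp only [Nat.zero_add] at this
      rw [this, if_pos rfl, hq0]
      simp [hc]
    · have hz : (Q ^ (n + 1)) (qs n) = 0 := by
        have hp : Q ^ (n + 1) = Q * Q ^ n := pow_succ' Q n
        rw [hp, Module.End.mul_apply]
        have := L1 n 0
        simp only [Nat.zero_add] at this
        rw [this, hq0, map_smul]
        have : Q (1 : Polynomial ℝ) = 0 := by simpa using hQc 1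
        rw [this, smul_zero]
      have hk : k = (k - (n + 1)) + (n + 1) := by omega
      rw [if_neg (by omega), hk, pow_add, Module.End.mul_apply, hz, map_zero,
        eval_zero]
  -- qs spans
  have hspan : ∀ p : Polynomial ℝ, p ∈ Submodule.span ℝ (Set.range qs) := by
    have key : ∀ n : ℕ, ∀ p : Polynomial ℝ, p.natDegree ≤ n →
        p ∈ Submodule.span ℝ (Set.range qs) := by
      intro n
      induction n with
      | zero =>
        intro p hp
        have : p = C (p.coeff 0) := eq_C_of_natDegree_le_zero hp
        rw [this]
        have : C (p.coeff 0) = (p.coeff 0) • qs 0 := by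
          rw [hq0]; simp [Polynomial.smul_eq_C_mul]
        rw [this]
        exact Submodule.smul_mem _ _ (Submodule.subset_span ⟨0, rfl⟩)
      | succ n ih =>
        intro p hp
        by_cases hle : p.natDegree ≤ n
        · exact ih p hle
        · have hdeg : p.natDegree = n + 1 := by omega
          have hpne : p ≠ 0 := by
            intro h; rw [h] at hdeg; simp at hdeg
          have hqne : qs (n + 1) ≠ 0 := by
            intro h
            have h2 : ((n + 1 : ℕ) : WithBot ℕ) = ⊥ := by
              rw [← hqdeg (n + 1), h, degree_zero]
            exact WithBot.natCast_ne_bot _ h2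
          set a : ℝ := p.leadingCoeff / (qs (n + 1)).leadingCoeff with ha
          have hlcq : (qs (n + 1)).leadingCoeff ≠ 0 := leadingCoeff_ne_zero.mpr hqne
          have hdp : p.degree = ((n + 1 : ℕ) : WithBot ℕ) := by
            rw [degree_eq_natDegree hpne, hdeg]
          have hane : a ≠ 0 :=
            div_ne_zero (leadingCoeff_ne_zero.mpr hpne) hlcq
          have hdaq : (a • qs (n + 1)).degree = p.degree := by
            rw [Polynomial.smul_eq_C_mul, degree_mul, degree_C hane, zero_add,
              hqdeg, hdp]
          have hlc : (a • qs (n + 1)).leadingCoeff = p.leadingCoeff := by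
            rw [Polynomial.smul_eq_C_mul, leadingCoeff_mul, leadingCoeff_C, ha,
              div_mul_cancel₀ _ hlcq]
          have hsub : (p - a • qs (n + 1)).degree < p.degree :=
            degree_sub_lt hdaq.symm hpne hlc.symm
          have hnd : (p - a • qs (n + 1)).natDegree ≤ n := by
            rcases eq_or_ne (p - a • qs (n + 1)) 0 with h0 | h0
            · simp [h0]
            · have h2 : (((p - a • qs (n + 1)).natDegree : ℕ) : WithBot ℕ)
                  < ((n + 1 : ℕ) : WithBot ℕ) := by
                rw [← degree_eq_natDegree h0, ← hdp]
                exact hsub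
              have := (Nat.cast_lt (α := WithBot ℕ)).mp h2
              omega
          have hmem := ih _ hnd
          have : p = (p - a • qs (n + 1)) + a • qs (n + 1) := by ring
          rw [this]
          exact Submodule.add_mem _ hmem
            (Submodule.smul_mem _ _ (Submodule.subset_span ⟨n + 1, rfl⟩))
    exact fun p => key p.natDegree p le_rfl
  have hSbij : Function.Bijective S := Module.End.isUnit_iff S |>.mp hS
  have hSinj : Function.Injective S := hSbij.injective
  -- representation
  have hrep : ∀ f : Polynomial ℝ, ∃ a : ℕ →₀ ℝ,
      S f = a.sum (fun n r => r • qs n) ∧ W f = a.sum (fun n r => r • X ^ n) := by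
    intro f
    obtain ⟨a, ha⟩ := (Finsupp.mem_span_range_iff_exists_finsupp).mp
      (by rw [Submodule.eq_top_iff'.mpr hspan]; trivial :
        S f ∈ Submodule.span ℝ (Set.range qs))
    have hfeq : f = a.sum (fun n r => r • s n) := by
      apply hSinj
      rw [map_finsuppSum]
      simp only [map_smul, hs]
      exact ha.symm
    refine ⟨a, by rw [← ha], ?_⟩
    rw [hfeq, map_finsuppSum]
    simp only [map_smul, hW]
  -- the key computation
  have hkey : ∀ (a b : ℕ →₀ ℝ),
      ((aeval (R := ℝ) Q (a.sum fun n r => r • X ^ n)) (b.sum fun n r => r • qs n)).eval 0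
        = ∑ k ∈ a.support, ∑ n ∈ b.support,
            a k * b n * (if k = n then c n else 0) := by
    intro a b
    rw [Finsupp.sum, Finsupp.sum]
    simp only [map_sum, map_smul, map_pow, aeval_X, LinearMap.sum_apply,
      LinearMap.smul_apply, eval_finset_sum, eval_smul, smul_eq_mul,
      Finset.mul_sum]
    rw [Finset.sum_comm]
    refine Finset.sum_congr rfl fun k _ => Finset.sum_congr rfl fun n _ => ?_
    rw [L2 n k]
    ring
  obtain ⟨symm, pos⟩ : True ∧ True := ⟨trivial, trivial⟩
  constructor
  · intro f g
    obtain ⟨a, haS, haW⟩ := hrep f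
    obtain ⟨b, hbS, hbW⟩ := hrep g
    rw [haW, hbS, hkey a b, hbW, haS, hkey b a, Finset.sum_comm]
    refine Finset.sum_congr rfl fun n _ => Finset.sum_congr rfl fun k _ => ?_
    by_cases h : k = n
    · subst h; ring
    · simp [h, Ne.symm h]
  · intro f hf
    obtain ⟨a, haS, haW⟩ := hrep f
    have hane : a ≠ 0 := by
      intro h
      apply hf
      apply hSinj
      rw [haS, h, map_zero]
      simp
    rw [haW, haS, hkey a a]
    have hdiag : ∀ k ∈ a.support,
        (∑ n ∈ a.support, a k * a n * (if k = n then c n else 0))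
          = a k * a k * c k := by
      intro k hk
      have : ∀ n, a k * a n * (if k = n then c n else 0)
          = if k = n then a k * a n * c n else 0 := by
        intro n; split <;> simp [*]
      simp only [this]
      rw [Finset.sum_ite_eq, if_pos hk]
    rw [Finset.sum_congr rfl hdiag]
    apply Finset.sum_pos'
    · intro k _
      exact mul_nonneg (mul_self_nonneg _) (hcpos k).le
    · obtain ⟨k, hk⟩ := Finsupp.ne_iff.mp hane
      refine ⟨k, Finsupp.mem_support_iff.mpr (by simpa using hk), ?_⟩
      exact mul_pos (mul_self_pos.mpr (by simpa using hk)) (hcpos k)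
end

section
/- (Operator identities for a dual pair) Let Q and x̂_Q be a dual pair of operators on F[x] satisfying [Q, x̂_Q] = id. Then for every n ≥ 1: (Q x̂_Q Q)^n = Q^n x̂_Q^n Q^n and (x̂_Q Q x̂_Q)^n = x̂_Q^n Q^n x̂_Q^n. -/
open Polynomial

lemma aux_QM {R : Type*} [Ring R] (Q M : R) (hcomm : Q * M - M * Q = 1) :
    ∀ k : ℕ, Q * M ^ (k + 1) = M ^ (k + 1) * Q + ((k + 1 : ℕ) : R) * M ^ k := by
  have h1 : Q * M = M * Q + 1 := by rw [← hcomm]; abel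
  intro k
  induction k with
  | zero => simpa using h1
  | succ k ih =>
      have h2 : Q * M ^ (k + 2) = (Q * M ^ (k + 1)) * M := by
        rw [pow_succ, mul_assoc]
      rw [h2, ih, add_mul, mul_assoc, h1]
      have e1 : M ^ (k+1) * (M * Q + 1) = M ^ (k+1+1) * Q + M ^ (k+1) := by
        rw [mul_add, mul_one, ← mul_assoc, ← pow_succ]
      have e2 : ((k + 1 : ℕ) : R) * M ^ k * M = ((k + 1 : ℕ) : R) * M ^ (k+1) := by
        rw [mul_assoc, ← pow_succ]
      rw [e1, e2]
      have e3 : ((k + 1 + 1 : ℕ) : R) = ((k + 1 : ℕ) : R) + 1 := by push_cast; ring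
      rw [e3, add_mul, one_mul, add_assoc, add_comm (M ^ (k+1))]

lemma aux_QnM {R : Type*} [Ring R] (Q M : R) (hcomm : Q * M - M * Q = 1) :
    ∀ k : ℕ, Q ^ (k + 1) * M = M * Q ^ (k + 1) + ((k + 1 : ℕ) : R) * Q ^ k := by
  have h1 : Q * M = M * Q + 1 := by rw [← hcomm]; abel
  intro k
  induction k with
  | zero => simpa using h1
  | succ k ih =>
      have h2 : Q ^ (k + 2) * M = Q * (Q ^ (k + 1) * M) := by
        rw [pow_succ', mul_assoc]
      rw [h2, ih, mul_add, ← mul_assoc, h1]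
      have e1 : (M * Q + 1) * Q ^ (k+1) = M * Q ^ (k+1+1) + Q ^ (k+1) := by
        rw [add_mul, one_mul, mul_assoc, ← pow_succ']
      have e2 : Q * (((k + 1 : ℕ) : R) * Q ^ k) = ((k + 1 : ℕ) : R) * Q ^ (k+1) := by
        rw [← mul_assoc, (Nat.cast_commute (k+1) Q).symm.eq, mul_assoc, ← pow_succ']
      rw [e1, e2]
      have e3 : ((k + 1 + 1 : ℕ) : R) = ((k + 1 : ℕ) : R) + 1 := by push_cast; ring
      rw [e3, add_mul, one_mul, add_assoc, add_comm (Q ^ (k+1))]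

lemma aux_step {R : Type*} [Ring R] (Q M a b c : R)
    (ha : Q * a = a * Q)
    (hca : c * a = a * c) (hcb : c * b = b * c)
    (k1 : a * (Q * M) = M * (a * Q) + c * a)
    (k2 : Q * (b * M) = b * M * Q + c * b) :
    a * b * a * (Q * M * Q) = a * Q * (b * M) * (a * Q) := by
  have L1 : a * b * a * (Q * M * Q) = a * b * (a * (Q * M)) * Q := by noncomm_ring
  rw [L1, k1]
  have L2 : a * b * (M * (a * Q) + c * a) * Q
      = a * (b * (M * (a * (Q * Q)))) + a * (b * c) * (a * Q) := by noncomm_ring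
  rw [L2, ← hcb]
  have L3 : a * (c * b) * (a * Q) = (a * c) * (b * (a * Q)) := by noncomm_ring
  rw [L3, ← hca]
  have R1 : a * Q * (b * M) * (a * Q) = a * (Q * (b * M)) * (a * Q) := by noncomm_ring
  rw [R1, k2]
  have R2 : a * (b * M * Q + c * b) * (a * Q)
      = a * (b * (M * (Q * a * Q))) + a * (c * b) * (a * Q) := by noncomm_ring
  rw [R2, ha, L3, ← hca]
  have R3 : a * (b * (M * (a * Q * Q))) = a * (b * (M * (a * (Q * Q)))) := by noncomm_ring
  rw [R3]

lemma aux_main {R : Type*} [Ring R] (Q M : R) (hcomm : Q * M - M * Q = 1) :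
    ∀ n : ℕ, 1 ≤ n → (Q * M * Q) ^ n = Q ^ n * M ^ n * Q ^ n := by
  intro n hn
  induction n with
  | zero => omega
  | succ n ih =>
      rcases Nat.lt_or_ge 1 (n + 1) with h | h
      · have hn1 : 1 ≤ n := by omega
        have ih1 := ih hn1
        rw [pow_succ, ih1]
        obtain ⟨m, rfl⟩ : ∃ m, n = m + 1 := ⟨n - 1, by omega⟩
        set a := Q ^ (m+1) with ha_def
        set b := M ^ (m+1) with hb_def
        set c := ((m + 1 + 1 : ℕ) : R) with hc_def
        have ha : Q * a = a * Q := by rw [ha_def, ← pow_succ', ← pow_succ]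
        have hM : M * b = b * M := by rw [hb_def, ← pow_succ', ← pow_succ]
        have hca : c * a = a * c := (Nat.cast_commute (m+1+1) a).eq
        have hcb' : c * b = b * c := (Nat.cast_commute (m+1+1) b).eq
        have k1 : a * (Q * M) = M * (a * Q) + c * a := by
          have := aux_QnM Q M hcomm (m+1)
          rw [ha_def, hc_def, ← mul_assoc, ← pow_succ, this]
        have k2 : Q * (b * M) = b * M * Q + c * b := by
          have := aux_QM Q M hcomm (m+1)
          rw [hb_def, hc_def, ← pow_succ, this]
        have key := aux_step Q M a b c ha hca hcb' k1 k2
        rw [key, pow_succ Q (m+1), pow_succ M (m+1), ← ha_def, ← hb_def]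
      · have hone : n + 1 = 1 := by omega
        rw [hone]
        simp [pow_one]

/-- for a dual pair Q, x̂_Q of operators on F[x] with [Q, x̂_Q] = id,
(Q x̂_Q Q)^n = Q^n x̂_Q^n Q^n and (x̂_Q Q x̂_Q)^n = x̂_Q^n Q^n x̂_Q^n for all n ≥ 1. -/
theorem dual_pair_operator_identities
    (F : Type*) [Field F] [CharZero F]
    (Q M : Module.End F (Polynomial F))
    (hcomm : Q * M - M * Q = 1) :
    ∀ n : ℕ, 1 ≤ n →
      (Q * M * Q) ^ n = Q ^ n * M ^ n * Q ^ n ∧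
      (M * Q * M) ^ n = M ^ n * Q ^ n * M ^ n := by
  intro n hn
  refine ⟨aux_main Q M hcomm n hn, ?_⟩
  have hcomm' : (MulOpposite.op M) * (MulOpposite.op Q) - (MulOpposite.op Q) * (MulOpposite.op M) = 1 := by
    rw [← MulOpposite.op_mul, ← MulOpposite.op_mul, ← MulOpposite.op_sub, hcomm, MulOpposite.op_one]
  have h := aux_main (MulOpposite.op M) (MulOpposite.op Q) hcomm' n hn
  apply MulOpposite.op_injective
  simp only [MulOpposite.op_pow, MulOpposite.op_mul]
  calc ((MulOpposite.op M) * ((MulOpposite.op Q) * (MulOpposite.op M))) ^ n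
      = ((MulOpposite.op M) * (MulOpposite.op Q) * (MulOpposite.op M)) ^ n := by rw [mul_assoc]
    _ = (MulOpposite.op M) ^ n * (MulOpposite.op Q) ^ n * (MulOpposite.op M) ^ n := h
    _ = (MulOpposite.op M) ^ n * ((MulOpposite.op Q) ^ n * (MulOpposite.op M) ^ n) := by rw [mul_assoc]
end
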